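/- arXiv:0705.0050 — 2 statements merged into one kernel-verified Lean document; each statement's English description precedes it below -/
import Mathlib

section
/- If f, g ∈ ℤ^{m|n}_+ and f ⪰ g in the super Bruhat ordering, then #f = #g, i.e., the degree of atypicality is constant on comparable elements. -/
/-!
Statement 5: if `f, g ∈ ℤ^{m|n}_+` and `f ⪰ g` in the super Bruhat ordering, then `#f = #g`,
i.e. the degree of atypicality is constant on comparable elements.

The super Bruhat ordering is the reflexive-transitive closure of the elementary lowering
relation `f ↓ g`, where `g` is (the reordering into `ℤ^{m|n}_+` of) either
(1) `f − d_i + d_j` for some `i < 0 < j` with `f(i) = f(j)`,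
(2) `f·τ_{ij}` for some `i < j < 0` with `f(i) > f(j)`, or
(3) `f·τ_{ij}` for some `0 < i < j` with `f(i) < f(j)`.
"Reordering" is recorded via equality of the multisets of values on the negative and on the
positive indices.
-/

open scoped BigOperators

namespace Stmt5

noncomputable def Ineg (m : ℕ) : Finset ℤ := Finset.Icc (-(m : ℤ)) (-1)
noncomputable def Ipos (n : ℕ) : Finset ℤ := Finset.Icc 1 (n : ℤ)

def ZPlus (m n : ℕ) (f : ℤ → ℤ) : Prop :=
  (∀ i j, i ∈ Ineg m → j ∈ Ineg m → i < j → f j < f i) ∧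
  (∀ i j, i ∈ Ipos n → j ∈ Ipos n → i < j → f i < f j)

/-- `g` has the same multiset of values as `h` on the negative and on the positive block,
i.e. `g` is a reordering (conjugate under `S_m × S_n`) of `h`. -/
def ConjEq (m n : ℕ) (g h : ℤ → ℤ) : Prop :=
  Multiset.map g (Ineg m).val = Multiset.map h (Ineg m).val ∧
  Multiset.map g (Ipos n).val = Multiset.map h (Ipos n).val

/-- `f·τ_{ij}`. -/
def swapFn (f : ℤ → ℤ) (i j : ℤ) : ℤ → ℤ :=
  fun k => if k = i then f j else if k = j then f i else f k

/-- `f − d_i + d_j` for `i < 0 < j` (both values drop by 1 since `d_k = −sgn(k) δ_k`). -/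
def lowerFn (f : ℤ → ℤ) (i j : ℤ) : ℤ → ℤ :=
  fun k => if k = i then f i - 1 else if k = j then f j - 1 else f k

/-- The elementary relation `f ↓ g` of the super Bruhat ordering, between elements of
`ℤ^{m|n}_+`. -/
def DownStep (m n : ℕ) (f g : ℤ → ℤ) : Prop :=
  ZPlus m n f ∧ ZPlus m n g ∧
    ((∃ i ∈ Ineg m, ∃ j ∈ Ipos n, f i = f j ∧ ConjEq m n g (lowerFn f i j)) ∨
     (∃ i ∈ Ineg m, ∃ j ∈ Ineg m, i < j ∧ f j < f i ∧ ConjEq m n g (swapFn f i j)) ∨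
     (∃ i ∈ Ipos n, ∃ j ∈ Ipos n, i < j ∧ f i < f j ∧ ConjEq m n g (swapFn f i j)))

/-- `f ⪰ g` in the super Bruhat ordering. -/
def SuperBruhatGE (m n : ℕ) (f g : ℤ → ℤ) : Prop :=
  Relation.ReflTransGen (DownStep m n) f g

/-- The degree of atypicality: the number of pairs `(i,j)`, `i<0<j`, with `f(i) = f(j)`. -/
noncomputable def atyp (m n : ℕ) (f : ℤ → ℤ) : ℕ :=
  (((Ineg m) ×ˢ (Ipos n)).filter fun p => f p.1 = f p.2).card

/-
Atypicality counts matching pairs, so it only depends on the multisets of values on the two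
blocks; the swap moves permute values inside a block and leave these multisets unchanged. The
lowering move turns the matching pair `c = c` into `c - 1 = c - 1`; since values stay distinct
within each block before and after the move, no other pair gains or loses a match.
-/

lemma notMem_Ipos_of_mem_Ineg {m n : ℕ} {i : ℤ} (hi : i ∈ Ineg m) : i ∉ Ipos n := by
  simp only [Ineg, Ipos, Finset.mem_Icc] at hi ⊢; omega

lemma notMem_Ineg_of_mem_Ipos {m n : ℕ} {j : ℤ} (hj : j ∈ Ipos n) : j ∉ Ineg m :=
  fun hi => notMem_Ipos_of_mem_Ineg hi hj

namespace ZPlus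

variable {m n : ℕ} {f : ℤ → ℤ}

lemma injOn_Ineg (hf : ZPlus m n f) : Set.InjOn f (Ineg m) :=
  StrictAntiOn.injOn fun _ ha _ hb hab => hf.1 _ _ ha hb hab

lemma injOn_Ipos (hf : ZPlus m n f) : Set.InjOn f (Ipos n) :=
  StrictMonoOn.injOn fun _ ha _ hb hab => hf.2 _ _ ha hb hab

end ZPlus

lemma injOn_of_map_val_eq {α β : Type*} {s : Finset α} {g h : α → β} (hgh : s.val.map g = s.val.map h)
    (hg : Set.InjOn g s) : Set.InjOn h s := by
  have hnodup := (Multiset.nodup_map_iff_inj_on s.nodup).mpr fun x hx y hy => @hg x hx y hy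
  rw [hgh] at hnodup
  exact fun x hx y hy => Multiset.inj_on_of_nodup_map hnodup x hx y hy

lemma atyp_eq_sum_count (m n : ℕ) (f : ℤ → ℤ) :
    atyp m n f = (((Ineg m).val.map f).map (((Ipos n).val.map f).count ·)).sum := by
  classical
  rw [atyp, Finset.card_filter, Finset.sum_product, Multiset.map_map]
  refine Finset.sum_congr rfl fun i _ => ?_
  rw [Function.comp_apply, Multiset.count_map, ← Finset.card_filter]
  rfl

lemma atyp_congr_of_conjEq {m n : ℕ} {g h : ℤ → ℤ} (hc : ConjEq m n g h) :
    atyp m n g = atyp m n h := by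
  rw [atyp_eq_sum_count, atyp_eq_sum_count, hc.1, hc.2]

lemma swapFn_eq_comp (f : ℤ → ℤ) (i j : ℤ) : swapFn f i j = f ∘ Equiv.swap i j := by
  funext k
  simp only [swapFn, Function.comp_apply, Equiv.swap_apply_def]
  split_ifs <;> rfl

lemma map_val_swapFn {s : Finset ℤ} {i j : ℤ} (hij : i ∈ s ↔ j ∈ s) (f : ℤ → ℤ) :
    s.val.map (swapFn f i j) = s.val.map f := by
  have hs : s.map (Equiv.swap i j).toEmbedding = s := by
    ext x
    simp only [Finset.mem_map_equiv, Equiv.symm_swap, Equiv.swap_apply_def]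
    split_ifs with h₁ h₂ <;> simp_all
  rw [swapFn_eq_comp, ← Multiset.map_map]
  exact congrArg (Multiset.map f ∘ Finset.val) hs

lemma conjEq_swapFn_of_mem_Ineg {m n : ℕ} {i j : ℤ} (hi : i ∈ Ineg m) (hj : j ∈ Ineg m)
    (f : ℤ → ℤ) : ConjEq m n (swapFn f i j) f :=
  ⟨map_val_swapFn (iff_of_true hi hj) f,
    map_val_swapFn (iff_of_false (notMem_Ipos_of_mem_Ineg hi)
      (notMem_Ipos_of_mem_Ineg hj)) f⟩

lemma conjEq_swapFn_of_mem_Ipos {m n : ℕ} {i j : ℤ} (hi : i ∈ Ipos n) (hj : j ∈ Ipos n)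
    (f : ℤ → ℤ) : ConjEq m n (swapFn f i j) f :=
  ⟨map_val_swapFn (iff_of_false (notMem_Ineg_of_mem_Ipos hi)
      (notMem_Ineg_of_mem_Ipos hj)) f,
    map_val_swapFn (iff_of_true hi hj) f⟩

/-- For `φ` as for `ψ`, a pair through `i` or through `j` matches iff it is `(i, j)`. -/
lemma eq_iff_eq_of_injOn {α β : Type*} {A B : Set α} {φ ψ : α → β} {i j : α}
    (hφA : Set.InjOn φ A) (hφB : Set.InjOn φ B) (hψA : Set.InjOn ψ A) (hψB : Set.InjOn ψ B)
    (hi : i ∈ A) (hj : j ∈ B) (hφ : φ i = φ j) (hψ : ψ i = ψ j)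
    (hA : ∀ a ∈ A, a ≠ i → ψ a = φ a) (hB : ∀ b ∈ B, b ≠ j → ψ b = φ b)
    {a b : α} (ha : a ∈ A) (hb : b ∈ B) : ψ a = ψ b ↔ φ a = φ b := by
  by_cases hai : a = i
  · subst hai
    rw [hφ, hψ, hφB.eq_iff hj hb, hψB.eq_iff hj hb]
  by_cases hbj : b = j
  · subst hbj
    rw [← hφ, ← hψ, hφA.eq_iff ha hi, hψA.eq_iff ha hi]
  rw [hA a ha hai, hB b hb hbj]

lemma atyp_lowerFn {m n : ℕ} {f : ℤ → ℤ} (hf : ZPlus m n f) {i j : ℤ}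
    (hi : i ∈ Ineg m) (hj : j ∈ Ipos n) (hfij : f i = f j)
    (hlA : Set.InjOn (lowerFn f i j) (Ineg m)) (hlB : Set.InjOn (lowerFn f i j) (Ipos n)) :
    atyp m n (lowerFn f i j) = atyp m n f := by
  have hji : j ≠ i := ne_of_mem_of_not_mem hj (notMem_Ipos_of_mem_Ineg hi)
  unfold atyp
  congr 1
  refine Finset.filter_congr fun p hp => ?_
  obtain ⟨ha, hb⟩ := Finset.mem_product.mp hp
  refine eq_iff_eq_of_injOn hf.injOn_Ineg hf.injOn_Ipos hlA hlB hi hj hfij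
    (by simp [lowerFn, hji, hfij]) (fun a ha hai => ?_) (fun b hb hbj => ?_) ha hb
  · have haj : a ≠ j := ne_of_mem_of_not_mem ha (notMem_Ineg_of_mem_Ipos hj)
    simp [lowerFn, hai, haj]
  · have hbi : b ≠ i := ne_of_mem_of_not_mem hb (notMem_Ipos_of_mem_Ineg hi)
    simp [lowerFn, hbi, hbj]

lemma DownStep.atyp_eq {m n : ℕ} {f g : ℤ → ℤ} (h : DownStep m n f g) :
    atyp m n f = atyp m n g := by
  obtain ⟨hf, hg, ⟨i, hi, j, hj, hfij, hc⟩ | ⟨i, hi, j, hj, -, -, hc⟩ |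
    ⟨i, hi, j, hj, -, -, hc⟩⟩ := h
  · rw [atyp_congr_of_conjEq hc, atyp_lowerFn hf hi hj hfij
      (injOn_of_map_val_eq hc.1 hg.injOn_Ineg)
      (injOn_of_map_val_eq hc.2 hg.injOn_Ipos)]
  · rw [atyp_congr_of_conjEq hc, atyp_congr_of_conjEq (conjEq_swapFn_of_mem_Ineg hi hj f)]
  · rw [atyp_congr_of_conjEq hc, atyp_congr_of_conjEq (conjEq_swapFn_of_mem_Ipos hi hj f)]

theorem atypicality_constant_on_comparable_general (m n : ℕ) (f g : ℤ → ℤ)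
    (h : SuperBruhatGE m n f g) :
    atyp m n f = atyp m n g := by
  induction h with
  | refl => rfl
  | tail _ step ih => exact ih.trans step.atyp_eq

theorem atypicality_constant_on_comparable (m n : ℕ) (f g : ℤ → ℤ)
    (hf : ZPlus m n f) (hg : ZPlus m n g) (h : SuperBruhatGE m n f g) :
    atyp m n f = atyp m n g :=
  atypicality_constant_on_comparable_general m n f g h

end Stmt5
end

section
/- There is a bijection ♮ : ℤ^{m+∞}_+ → ℤ^{m|∞}_+ given by f = (f^{<0} | f^{>0}) ↦ (f^{<0} | ℤ∖f^{>0}), i.e., keeping the values on negative indices and replacing the values on positive indices by the complement of their image in ℤ, listed in increasing order. -/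
/-!
Both directions come from one fact about a strictly increasing `u : ℕ → ℤ` with
`u n = n + c` for large `n`: the set `-(ℤ ∖ range u)` is bounded below and contains all large
integers, so it is the range of a strictly increasing `w`, and counting the integers of an
interval `[1 - c - N, a)` (those of this set plus `-u 0, …, -u (N - 1)`) shows that
`w n = n + 1 - c` for large `n`. For `f ∈ ℤ^{m+∞}_+` apply it to `u n = -f (n + 1)` with
`c = 0`; for `g ∈ ℤ^{m|∞}_+` apply it to `u n = g (n + 1)` with `c = 1` and negate `w`.
Uniqueness holds because a strictly monotone sequence is determined by its range.
-/

namespace Stmt7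

/-- membership in the index set `I(m|∞) = {-m,…,-1} ∪ {1,2,…}`. -/
def Imem (m : ℕ) (i : ℤ) : Prop := (-(m : ℤ) ≤ i ∧ i ≤ -1) ∨ 1 ≤ i

/-- `ℤ^{m+∞}_+`: strictly decreasing on `{-m,…,-1}`, strictly decreasing on positive
indices, with `f(i) = 1 − i` for `i ≫ 0`. -/
def ZmInfPlus (m : ℕ) (f : ℤ → ℤ) : Prop :=
  (∀ i j : ℤ, -(m : ℤ) ≤ i → i < j → j ≤ -1 → f j < f i) ∧
  (∀ i : ℤ, 1 ≤ i → f (i + 1) < f i) ∧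
  (∃ N : ℤ, ∀ i : ℤ, 1 ≤ i → N ≤ i → f i = 1 - i)

/-- `ℤ^{m|∞}_+`: strictly decreasing on `{-m,…,-1}`, strictly increasing on positive
indices, with `g(i) = i` for `i ≫ 0`. -/
def ZmInfSuper (m : ℕ) (g : ℤ → ℤ) : Prop :=
  (∀ i j : ℤ, -(m : ℤ) ≤ i → i < j → j ≤ -1 → g j < g i) ∧
  (∀ i : ℤ, 1 ≤ i → g i < g (i + 1)) ∧
  (∃ N : ℤ, ∀ i : ℤ, 1 ≤ i → N ≤ i → g i = i)

/-- `g = f^♮` : same values on negative indices, and the set of values of `g` on positive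
indices is the complement in `ℤ` of the set of values of `f` on positive indices. -/
def NaturalRel (f g : ℤ → ℤ) : Prop :=
  (∀ i : ℤ, i ≤ -1 → g i = f i) ∧
  (∀ a : ℤ, (∃ j : ℤ, 1 ≤ j ∧ g j = a) ↔ ¬ (∃ j : ℤ, 1 ≤ j ∧ f j = a))

end Stmt7

open Set Filter Pointwise

theorem Set.range_neg {α G : Type*} [InvolutiveNeg G] (u : α → G) :
    range (fun a => -u a) = -range u := by
  rw [← image_neg_eq_neg, ← range_comp]
  rfl

theorem StrictMono.ncard_range_inter_Iio {α : Type*} [LinearOrder α] {w : ℕ → α}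
    (hw : StrictMono w) (n : ℕ) : (range w ∩ Iio (w n)).ncard = n := by
  have : range w ∩ Iio (w n) = w '' Iio n := by
    ext a
    constructor
    · rintro ⟨⟨k, rfl⟩, hk⟩
      exact ⟨k, hw.lt_iff_lt.1 hk, rfl⟩
    · rintro ⟨k, hk, rfl⟩
      exact ⟨mem_range_self k, hw hk⟩
  rw [this, ncard_image_of_injective _ hw.injective, ncard_Iio_nat]

theorem exists_strictMono_range_eq_of_bddBelow {B : Set ℤ} (hbdd : BddBelow B)
    (hinf : B.Infinite) : ∃ w : ℕ → ℤ, StrictMono w ∧ range w = B := by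
  obtain ⟨L, hL⟩ := hbdd
  set p : ℕ → Prop := fun k => L + k ∈ B
  have hB : B = (fun k : ℕ => L + k) '' Set.ofPred p := by
    ext b
    refine ⟨fun hb => ⟨(b - L).toNat, ?_, ?_⟩, ?_⟩
    · show L + ((b - L).toNat : ℤ) ∈ B
      rwa [Int.toNat_of_nonneg (sub_nonneg.2 (hL hb)), add_sub_cancel]
    · show L + ((b - L).toNat : ℤ) = b
      rw [Int.toNat_of_nonneg (sub_nonneg.2 (hL hb)), add_sub_cancel]
    · rintro ⟨k, hk, rfl⟩
      exact hk
  have hp : (Set.ofPred p).Infinite := fun hfin => hinf (hB ▸ hfin.image _)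
  refine ⟨fun n => L + Nat.nth p n, ?_, ?_⟩
  · exact fun a b hab => by simpa using Nat.nth_strictMono hp hab
  · rw [hB, ← Nat.range_nth_of_infinite hp, ← range_comp]
    rfl

theorem exists_strictMono_range_eq_neg_compl {u : ℕ → ℤ} (hu : StrictMono u) {c : ℤ}
    (hc : ∀ᶠ n in atTop, u n = n + c) :
    ∃ w : ℕ → ℤ, StrictMono w ∧ range w = -(range u)ᶜ ∧ ∀ᶠ n in atTop, w n = n + 1 - c := by
  obtain ⟨N, hN⟩ := eventually_atTop.1 hc
  set B := -(range u)ᶜ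
  have u_lt : ∀ k < N, u k < N + c := fun k hk => hN N le_rfl ▸ hu hk
  have tail_mem : ∀ b, 1 - u 0 ≤ b → b ∈ B := by
    rintro b hb ⟨k, hk⟩
    linarith [hu.monotone (Nat.zero_le k)]
  have lower : ∀ b ∈ B, 1 - c - N ≤ b := by
    intro b hb
    by_contra! h
    refine hb ⟨(-b - c).toNat, ?_⟩
    rw [hN _ (by omega)]
    omega
  obtain ⟨w, hw, hwB⟩ := exists_strictMono_range_eq_of_bddBelow ⟨_, lower⟩
    ((Ici_infinite _).mono tail_mem)
  have count_B : ∀ a, 1 - u 0 ≤ a → ((B ∩ Iio a).ncard : ℤ) = a - 1 + c := by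
    intro a ha
    have hsplit : Ico (1 - c - N) a = (B ∩ Iio a) ∪ (-u) '' Iio N := by
      ext x
      simp only [mem_Ico, mem_union, mem_inter_iff, mem_Iio, mem_image, Pi.neg_apply]
      constructor
      · rintro ⟨hx, hxa⟩
        by_cases hxB : x ∈ B
        · exact Or.inl ⟨hxB, hxa⟩
        · obtain ⟨k, hk⟩ := not_not.1 (mem_neg.not.1 hxB)
          refine Or.inr ⟨k, ?_, by omega⟩
          by_contra! hNk
          rw [hN k hNk] at hk
          omega
      · rintro (⟨hxB, hxa⟩ | ⟨k, hk, rfl⟩)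
        · exact ⟨lower x hxB, hxa⟩
        · have := u_lt k hk
          have := hu.monotone (Nat.zero_le k)
          omega
    have hdisj : Disjoint (B ∩ Iio a) ((-u) '' Iio N) := by
      rw [disjoint_left]
      rintro _ ⟨hxB, -⟩ ⟨k, -, rfl⟩
      exact hxB ⟨k, (neg_neg _).symm⟩
    have hcard := congrArg ncard hsplit
    rw [ncard_union_eq hdisj ((finite_Ico (1 - c - N) a).subset (hsplit ▸ subset_union_left)),
      ncard_image_of_injective (f := -u) _ (neg_injective.comp hu.injective), ncard_Iio_nat,
      ← Finset.coe_Ico, ncard_coe_finset, Int.card_Ico] at hcard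
    have hu0 := hN N le_rfl ▸ hu.monotone (Nat.zero_le N)
    omega
  refine ⟨w, hw, hwB, eventually_atTop.2 ⟨(c - u 0).toNat, fun n hn => ?_⟩⟩
  have ha : 1 - u 0 ≤ n + 1 - c := by omega
  obtain ⟨k, hk⟩ := hwB ▸ tail_mem _ ha
  have hkn : (k : ℤ) = n := by
    rw [← hw.ncard_range_inter_Iio k, hwB, hk, count_B _ ha]
    ring
  rw [← Nat.cast_injective hkn, hk, hkn]

namespace Stmt7

def posSeq (f : ℤ → ℤ) (n : ℕ) : ℤ := f (n + 1)

def glue (h : ℤ → ℤ) (w : ℕ → ℤ) (i : ℤ) : ℤ := if 1 ≤ i then w (i - 1).toNat else h i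

lemma toNat_sub_one_add_one {i : ℤ} (hi : 1 ≤ i) : ((i - 1).toNat : ℤ) + 1 = i := by
  omega

lemma forall_nat_succ_iff {P : ℤ → Prop} : (∀ n : ℕ, P (n + 1)) ↔ ∀ i : ℤ, 1 ≤ i → P i := by
  refine ⟨fun h i hi => ?_, fun h n => h _ (by omega)⟩
  simpa only [toNat_sub_one_add_one hi] using h (i - 1).toNat

lemma eventually_nat_succ_iff {P : ℤ → Prop} :
    (∀ᶠ n : ℕ in atTop, P (n + 1)) ↔ ∃ N : ℤ, ∀ i : ℤ, 1 ≤ i → N ≤ i → P i := by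
  rw [eventually_atTop]
  constructor
  · rintro ⟨N, hN⟩
    refine ⟨N + 1, fun i hi hNi => ?_⟩
    simpa only [toNat_sub_one_add_one hi] using hN (i - 1).toNat (by omega)
  · rintro ⟨N, hN⟩
    exact ⟨N.toNat, fun n hn => hN _ (by omega) (by omega)⟩

lemma mem_range_posSeq {f : ℤ → ℤ} {a : ℤ} : a ∈ range (posSeq f) ↔ ∃ j, 1 ≤ j ∧ f j = a := by
  simp only [mem_range, posSeq]
  exact ⟨fun ⟨n, hn⟩ => ⟨n + 1, by omega, hn⟩,
    fun ⟨j, hj, hja⟩ => ⟨(j - 1).toNat, by rwa [toNat_sub_one_add_one hj]⟩⟩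

lemma strictMono_posSeq_iff {g : ℤ → ℤ} :
    StrictMono (posSeq g) ↔ ∀ i : ℤ, 1 ≤ i → g i < g (i + 1) := by
  rw [← forall_nat_succ_iff]
  exact ⟨fun h n => h (Nat.lt_succ_self n), fun h => strictMono_nat_of_lt_succ fun n => by
    simpa [posSeq, add_assoc] using h n⟩

lemma strictAnti_posSeq_iff {f : ℤ → ℤ} :
    StrictAnti (posSeq f) ↔ ∀ i : ℤ, 1 ≤ i → f (i + 1) < f i := by
  rw [← forall_nat_succ_iff]
  exact ⟨fun h n => h (Nat.lt_succ_self n), fun h => strictAnti_nat_of_succ_lt fun n => by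
    simpa [posSeq, add_assoc] using h n⟩

variable {m : ℕ} {f f' g g' : ℤ → ℤ}

lemma zmInfSuper_iff : ZmInfSuper m g ↔
    (∀ i j : ℤ, -(m : ℤ) ≤ i → i < j → j ≤ -1 → g j < g i) ∧
      StrictMono (posSeq g) ∧ ∀ᶠ n in atTop, posSeq g n = n + 1 := by
  rw [ZmInfSuper, strictMono_posSeq_iff, ← eventually_nat_succ_iff (P := fun i => g i = i)]
  rfl

lemma zmInfPlus_iff : ZmInfPlus m f ↔
    (∀ i j : ℤ, -(m : ℤ) ≤ i → i < j → j ≤ -1 → f j < f i) ∧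
      StrictAnti (posSeq f) ∧ ∀ᶠ n in atTop, posSeq f n = -n := by
  rw [ZmInfPlus, strictAnti_posSeq_iff, ← eventually_nat_succ_iff (P := fun i => f i = 1 - i)]
  simp only [posSeq, sub_add_cancel_right]

lemma naturalRel_iff : NaturalRel f g ↔
    (∀ i : ℤ, i ≤ -1 → g i = f i) ∧ range (posSeq g) = (range (posSeq f))ᶜ := by
  simp only [NaturalRel, Set.ext_iff, mem_compl_iff, mem_range_posSeq]

lemma posSeq_glue (h : ℤ → ℤ) (w : ℕ → ℤ) : posSeq (glue h w) = w := by
  ext n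
  simp [posSeq, glue]

lemma glue_of_lt_one (h : ℤ → ℤ) (w : ℕ → ℤ) {i : ℤ} (hi : i < 1) : glue h w i = h i :=
  if_neg hi.not_ge

lemma eq_of_posSeq_eq (hneg : ∀ i : ℤ, i ≤ -1 → f i = g i) (hpos : posSeq f = posSeq g)
    {i : ℤ} (hi : Imem m i) : f i = g i := by
  rcases hi with ⟨-, hi⟩ | hi
  · exact hneg i hi
  · simpa only [posSeq, toNat_sub_one_add_one hi] using congrFun hpos (i - 1).toNat

lemma exists_zmInfSuper_naturalRel (hf : ZmInfPlus m f) :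
    ∃ g, ZmInfSuper m g ∧ NaturalRel f g := by
  obtain ⟨hf_neg, hf_anti, hf_tail⟩ := zmInfPlus_iff.1 hf
  obtain ⟨w, hw, hw_range, hw_tail⟩ := exists_strictMono_range_eq_neg_compl hf_anti.neg
    (c := 0) (hf_tail.mono fun n hn => by simp [hn])
  refine ⟨glue f w, zmInfSuper_iff.2 ⟨fun i j hi hij hj => ?_, ?_, ?_⟩,
    naturalRel_iff.2 ⟨fun i hi => glue_of_lt_one f w (by omega), ?_⟩⟩
  · rw [glue_of_lt_one f w (by omega), glue_of_lt_one f w (by omega)]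
    exact hf_neg i j hi hij hj
  · rwa [posSeq_glue]
  · simpa [posSeq_glue] using hw_tail
  · rw [posSeq_glue, hw_range, range_neg, ← compl_neg, neg_neg]

lemma exists_zmInfPlus_naturalRel (hg : ZmInfSuper m g) :
    ∃ f, ZmInfPlus m f ∧ NaturalRel f g := by
  obtain ⟨hg_neg, hg_mono, hg_tail⟩ := zmInfSuper_iff.1 hg
  obtain ⟨w, hw, hw_range, hw_tail⟩ := exists_strictMono_range_eq_neg_compl hg_mono hg_tail
  refine ⟨glue g (fun n => -w n), zmInfPlus_iff.2 ⟨fun i j hi hij hj => ?_, ?_, ?_⟩,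
    naturalRel_iff.2 ⟨fun i hi => (glue_of_lt_one g _ (by omega)).symm, ?_⟩⟩
  · rw [glue_of_lt_one g _ (by omega), glue_of_lt_one g _ (by omega)]
    exact hg_neg i j hi hij hj
  · rw [posSeq_glue]
    exact hw.neg
  · simpa [posSeq_glue] using hw_tail
  · rw [posSeq_glue, range_neg, hw_range, neg_neg, compl_compl]

lemma NaturalRel.right_unique (h : NaturalRel f g) (h' : NaturalRel f g')
    (hg : StrictMono (posSeq g)) (hg' : StrictMono (posSeq g')) {i : ℤ} (hi : Imem m i) :
    g' i = g i := by
  rw [naturalRel_iff] at h h'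
  exact eq_of_posSeq_eq (fun i hi => (h'.1 i hi).trans (h.1 i hi).symm)
    ((hg'.range_inj hg).1 (h'.2.trans h.2.symm)) hi

lemma NaturalRel.left_unique (h : NaturalRel f g) (h' : NaturalRel f' g)
    (hf : StrictAnti (posSeq f)) (hf' : StrictAnti (posSeq f')) {i : ℤ} (hi : Imem m i) :
    f' i = f i := by
  rw [naturalRel_iff, eq_compl_comm] at h h'
  refine eq_of_posSeq_eq (fun i hi => (h'.1 i hi).symm.trans (h.1 i hi)) ?_ hi
  refine neg_injective ((hf'.neg.range_inj hf.neg).1 ?_)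
  rw [range_neg, range_neg, h.2, h'.2]

/-- `♮` is a bijection `ℤ^{m+∞}_+ → ℤ^{m|∞}_+`. -/
theorem natural_bijection (m : ℕ) :
    (∀ f : ℤ → ℤ, ZmInfPlus m f →
      ∃ g : ℤ → ℤ, ZmInfSuper m g ∧ NaturalRel f g ∧
        ∀ g' : ℤ → ℤ, ZmInfSuper m g' → NaturalRel f g' →
          ∀ i : ℤ, Imem m i → g' i = g i) ∧
    (∀ g : ℤ → ℤ, ZmInfSuper m g →
      ∃ f : ℤ → ℤ, ZmInfPlus m f ∧ NaturalRel f g ∧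
        ∀ f' : ℤ → ℤ, ZmInfPlus m f' → NaturalRel f' g →
          ∀ i : ℤ, Imem m i → f' i = f i) := by
  refine ⟨fun f hf => ?_, fun g hg => ?_⟩
  · obtain ⟨g, hg, hfg⟩ := exists_zmInfSuper_naturalRel hf
    exact ⟨g, hg, hfg, fun g' hg' hfg' i hi =>
      hfg.right_unique hfg' (zmInfSuper_iff.1 hg).2.1 (zmInfSuper_iff.1 hg').2.1 hi⟩
  · obtain ⟨f, hf, hfg⟩ := exists_zmInfPlus_naturalRel hg
    exact ⟨f, hf, hfg, fun f' hf' hfg' i hi =>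
      hfg.left_unique hfg' (zmInfPlus_iff.1 hf).2.1 (zmInfPlus_iff.1 hf').2.1 hi⟩

end Stmt7
end
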